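/- arXiv:math/0212190 — 2 statements merged into one kernel-verified Lean document; each statement's English description precedes it below -/
import Mathlib

section
/- The set {√2, √3, √5, √7, ...} of square roots of the prime numbers is linearly independent over ℚ (as elements of ℝ). -/
/-!
If `x² ∈ K`, then `K(x) = K + K x`. So if `√n ∈ K(√p)` where `n, p ∈ K`, squaring `√n = a + b √p`
shows that `b = 0`, `a = 0` or `√p ∈ K`: one of `√n`, `√(p n)`, `√p` already lies in `K`.
Inducting on a finite set `S` of primes, this gives `√n ∉ ℚ(√q : q ∈ S)` for every squarefree
`n ≠ 1` prime to `S`, the base case being the irrationality of `√n`. Taking `n` prime and `S` the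
other primes, no `√p` lies in the `ℚ`-span of the others.
-/

open IntermediateField

namespace IntermediateField

variable {F E : Type*} [Field F] [Field E] [Algebra F E] {K : IntermediateField F E} {x : E}

/-- `K + K x`. -/
def addMulOfSqMem (hx : x ^ 2 ∈ K) (hxK : x ∉ K) : IntermediateField F E where
  carrier := {y | ∃ a ∈ K, ∃ b ∈ K, y = a + b * x}
  algebraMap_mem' r := ⟨_, K.algebraMap_mem r, 0, K.zero_mem, by ring⟩
  add_mem' := by
    rintro _ _ ⟨a, ha, b, hb, rfl⟩ ⟨c, hc, d, hd, rfl⟩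
    exact ⟨a + c, add_mem ha hc, b + d, add_mem hb hd, by ring⟩
  mul_mem' := by
    rintro _ _ ⟨a, ha, b, hb, rfl⟩ ⟨c, hc, d, hd, rfl⟩
    exact ⟨a * c + b * d * x ^ 2, add_mem (mul_mem ha hc) (mul_mem (mul_mem hb hd) hx),
      a * d + b * c, add_mem (mul_mem ha hd) (mul_mem hb hc), by ring⟩
  inv_mem' := by
    rintro _ ⟨a, ha, b, hb, rfl⟩
    by_cases h0 : a + b * x = 0
    · exact ⟨0, K.zero_mem, 0, K.zero_mem, by simp [h0]⟩
    have hd : a ^ 2 - b ^ 2 * x ^ 2 ≠ 0 := by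
      intro hd
      have hprod : (a + b * x) * (a - b * x) = 0 := by linear_combination hd
      have hconj : a - b * x = 0 := (mul_eq_zero.mp hprod).resolve_left h0
      have hb0 : b ≠ 0 := by rintro rfl; apply h0; simpa using hconj
      have hx_eq : x = a / b := by field_simp; linear_combination -hconj
      exact hxK (hx_eq ▸ div_mem ha hb)
    have hdK : a ^ 2 - b ^ 2 * x ^ 2 ∈ K := sub_mem (pow_mem ha 2) (mul_mem (pow_mem hb 2) hx)
    refine ⟨a / (a ^ 2 - b ^ 2 * x ^ 2), div_mem ha hdK, -b / (a ^ 2 - b ^ 2 * x ^ 2),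
      div_mem (neg_mem hb) hdK, inv_eq_of_mul_eq_one_right ?_⟩
    field_simp
    ring

theorem le_addMulOfSqMem (hx : x ^ 2 ∈ K) (hxK : x ∉ K) :
    adjoin F (insert x (K : Set E)) ≤ addMulOfSqMem hx hxK :=
  adjoin_le_iff.mpr <| Set.insert_subset_iff.mpr
    ⟨⟨0, K.zero_mem, 1, K.one_mem, by ring⟩, fun a ha ↦ ⟨a, ha, 0, K.zero_mem, by ring⟩⟩

theorem exists_eq_add_mul_of_mem_adjoin_insert (hx : x ^ 2 ∈ K) {y : E}
    (hy : y ∈ adjoin F (insert x (K : Set E))) : ∃ a ∈ K, ∃ b ∈ K, y = a + b * x := by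
  by_cases hxK : x ∈ K
  · have hle : adjoin F (insert x (K : Set E)) ≤ K :=
      adjoin_le_iff.mpr (Set.insert_subset hxK le_rfl)
    exact ⟨y, hle hy, 0, K.zero_mem, by ring⟩
  · exact le_addMulOfSqMem hx hxK hy

theorem mem_or_mem_or_mul_mem_of_mem_adjoin_insert (h2 : (2 : E) ≠ 0) (hx : x ^ 2 ∈ K)
    {y : E} (hy2 : y ^ 2 ∈ K) (hy : y ∈ adjoin F (insert x (K : Set E))) :
    x ∈ K ∨ y ∈ K ∨ x * y ∈ K := by
  obtain ⟨a, ha, b, hb, rfl⟩ := exists_eq_add_mul_of_mem_adjoin_insert hx hy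
  by_cases hb0 : b = 0
  · exact Or.inr (Or.inl (by simpa [hb0] using ha))
  by_cases ha0 : a = 0
  · exact Or.inr (Or.inr (by simpa [ha0, sq, mul_left_comm] using mul_mem hb hx))
  left
  -- squaring `y = a + b x` isolates `2 a b x` in `K`
  have hx_eq : x = ((a + b * x) ^ 2 - a ^ 2 - b ^ 2 * x ^ 2) / (2 * a * b) := by
    field_simp
    ring
  rw [hx_eq]
  exact div_mem (sub_mem (sub_mem hy2 (pow_mem ha 2)) (mul_mem (pow_mem hb 2) hx))
    (mul_mem (mul_mem (ofNat_mem K 2) ha) hb)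

end IntermediateField

open Real

theorem Nat.not_isSquare_of_squarefree {n : ℕ} (hn : Squarefree n) (hn1 : n ≠ 1) :
    ¬IsSquare n := by
  rintro ⟨r, rfl⟩
  exact hn1 (by simp [Nat.isUnit_iff.mp (hn r dvd_rfl)])

theorem sqrt_notMem_adjoin_sqrt_finset (S : Finset ℕ) (hS : ∀ p ∈ S, p.Prime) {n : ℕ}
    (hn : Squarefree n) (hn1 : n ≠ 1) (hnS : ∀ p ∈ S, ¬p ∣ n) :
    √(n : ℝ) ∉ adjoin ℚ ((fun m : ℕ ↦ √(m : ℝ)) '' S) := by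
  induction S using Finset.induction_on generalizing n with
  | empty =>
    rw [Finset.coe_empty, Set.image_empty, adjoin_empty, mem_bot]
    exact irrational_sqrt_natCast_iff.mpr (Nat.not_isSquare_of_squarefree hn hn1)
  | @insert p S hpS ih =>
    rw [Finset.forall_mem_insert] at hS hnS
    obtain ⟨hp, hS⟩ := hS
    obtain ⟨hpn, hnS⟩ := hnS
    have hSp : ∀ q ∈ S, ¬q ∣ p := fun q hq hqp ↦
      hpS (((Nat.prime_dvd_prime_iff_eq (hS q hq) hp).mp hqp) ▸ hq)
    intro hmem
    rw [Finset.coe_insert, Set.image_insert_eq, ← adjoin_insert_adjoin] at hmem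
    have hsq : ∀ m : ℕ, √(m : ℝ) ^ 2 ∈ adjoin ℚ ((fun m : ℕ ↦ √(m : ℝ)) '' S) := fun m ↦ by
      rw [sq_sqrt m.cast_nonneg]
      exact _root_.natCast_mem _ m
    rcases mem_or_mem_or_mul_mem_of_mem_adjoin_insert two_ne_zero (hsq p) (hsq n) hmem with
      h | h | h
    · exact ih hS hp.squarefree hp.ne_one hSp h
    · exact ih hS hn hn1 hnS h
    · refine ih hS (n := p * n) ?_ ?_ ?_ (by rwa [Nat.cast_mul, sqrt_mul (Nat.cast_nonneg p)])
      · exact Nat.squarefree_mul_iff.mpr ⟨hp.coprime_iff_not_dvd.mpr hpn, hp.squarefree, hn⟩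
      · exact fun h ↦ hp.ne_one (Nat.eq_one_of_mul_eq_one_right h)
      · exact fun q hq hqpn ↦ ((hS q hq).dvd_mul.mp hqpn).elim (hSp q hq) (hnS q hq)

theorem sqrt_notMem_adjoin_sqrt (S : Set ℕ) (hS : ∀ p ∈ S, p.Prime) {n : ℕ}
    (hn : Squarefree n) (hn1 : n ≠ 1) (hnS : ∀ p ∈ S, ¬p ∣ n) :
    √(n : ℝ) ∉ adjoin ℚ ((fun m : ℕ ↦ √(m : ℝ)) '' S) := by
  classical
  intro hmem
  obtain ⟨T, hTS, hT⟩ := exists_finset_of_mem_adjoin hmem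
  obtain ⟨S', hS'S, rfl⟩ := Finset.subset_set_image_iff.mp hTS
  rw [Finset.coe_image] at hT
  exact sqrt_notMem_adjoin_sqrt_finset S' (fun p hp ↦ hS p (hS'S hp)) hn hn1
    (fun p hp ↦ hnS p (hS'S hp)) hT

/-- The square roots of the prime numbers are linearly independent over `ℚ`
as elements of the `ℚ`-vector space `ℝ`. -/
theorem stmt5 :
    LinearIndependent ℚ (fun p : Nat.Primes => Real.sqrt (p : ℕ)) := by
  rw [linearIndependent_iff_notMem_span]
  intro i hi
  let K := adjoin ℚ ((fun m : ℕ ↦ √(m : ℝ)) '' {p | p.Prime ∧ p ≠ i})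
  have hspan : Submodule.span ℚ ((fun p : Nat.Primes ↦ √((p : ℕ) : ℝ)) '' (Set.univ \ {i})) ≤
      K.toSubalgebra.toSubmodule := by
    rw [Submodule.span_le]
    rintro _ ⟨j, hj, rfl⟩
    exact subset_adjoin ℚ _ ⟨j, ⟨j.prop, fun h ↦ hj.2 (Subtype.ext h)⟩, rfl⟩
  exact sqrt_notMem_adjoin_sqrt _ (fun p hp ↦ hp.1) i.prop.squarefree i.prop.ne_one
    (fun p hp hpi ↦ hp.2 ((Nat.prime_dvd_prime_iff_eq hp.1 i.prop).mp hpi)) (hspan hi)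
end

section
/- Let K be a real closed field and let x be a positive element infinite over K (i.e., x > c for all c ∈ K) in a real closed extension. Then every element y of the real closure of K(x) that is infinite over K is comparable to x, i.e., there exist m, n ∈ ℕ with y ≤ xⁿ and x ≤ yᵐ. Hence the real closure of K(x) has exactly one more comparability class of positive infinite elements than K. -/
/-- A real closed field: an ordered field in which every nonnegative element is a square
and every odd-degree polynomial has a root. -/
def IsRealClosedField (F : Type*) [Field F] [LinearOrder F] [IsStrictOrderedRing F] : Prop :=
  (∀ x : F, 0 ≤ x → ∃ y, y ^ 2 = x) ∧
  ∀ p : Polynomial F, Odd p.natDegree → ∃ x, p.eval x = 0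

set_option synthInstance.maxHeartbeats 1000000
set_option maxHeartbeats 2000000

namespace Stmt13Aux
open Polynomial Finset
variable {L : Type*} [Field L] [LinearOrder L] [IsStrictOrderedRing L] {K : Subfield L} {t : L}

lemma abs_mem {a : L} (ha : a ∈ K) : |a| ∈ K := by
  rcases abs_cases a with ⟨h,_⟩|⟨h,_⟩ <;> rw [h]
  · exact ha
  · exact K.neg_mem ha

lemma abs_lt_t (ht : ∀ c ∈ K, c < t) {a : L} (ha : a ∈ K) : |a| < t :=
  ht _ (abs_mem ha)

lemma one_lt_t (ht : ∀ c ∈ K, c < t) : 1 < t := ht 1 K.one_mem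

lemma t_pos (ht : ∀ c ∈ K, c < t) : 0 < t := lt_trans one_pos (one_lt_t ht)

/-- coarse upper bound for a polynomial with coefficients in a set bounded by B, degree ≤ e -/

lemma aeval_abs_le_sum (ht : ∀ c ∈ K, c < t) (f : Polynomial K) (e : ℕ)
    (he : f.natDegree ≤ e) :
    |Polynomial.aeval t f| ≤ (∑ i ∈ range (e+1), |(f.coeff i : L)|) * t ^ e := by
  have h1 : (1:L) ≤ t := (one_lt_t ht).le
  have h0 : (0:L) ≤ t := (t_pos ht).le
  rw [Polynomial.aeval_eq_sum_range' (Nat.lt_succ_of_le he)]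
  calc |∑ i ∈ range (e+1), f.coeff i • t ^ i|
      ≤ ∑ i ∈ range (e+1), |f.coeff i • t ^ i| := Finset.abs_sum_le_sum_abs _ _
    _ ≤ ∑ i ∈ range (e+1), |(f.coeff i : L)| * t ^ e := by
        refine Finset.sum_le_sum fun i hi => ?_
        rw [Subfield.smul_def, smul_eq_mul, abs_mul, abs_of_nonneg (pow_nonneg h0 i)]
        exact mul_le_mul_of_nonneg_left
          (pow_le_pow_right₀ h1 (Nat.lt_succ_iff.mp (mem_range.mp hi))) (abs_nonneg _)
    _ = _ := (Finset.sum_mul _ _ _).symm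

lemma sum_abs_mem (f : Polynomial K) (e : ℕ) :
    (∑ i ∈ range (e+1), |(f.coeff i : L)|) ∈ K :=
  Subfield.sum_mem K fun i _ => abs_mem (f.coeff i).2

/-- coarse upper bound -/

lemma aeval_abs_le (ht : ∀ c ∈ K, c < t) (f : Polynomial K) :
    |Polynomial.aeval t f| ≤ t ^ (f.natDegree + 2) := by
  have h1 : (1:L) ≤ t := (one_lt_t ht).le
  have h0 : (0:L) ≤ t := (t_pos ht).le
  set e := f.natDegree
  calc |Polynomial.aeval t f| ≤ (∑ i ∈ range (e+1), |(f.coeff i : L)|) * t ^ e :=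
        aeval_abs_le_sum ht f e le_rfl
    _ ≤ (((e:L)+1) * t) * t ^ e := by
        refine mul_le_mul_of_nonneg_right ?_ (pow_nonneg h0 e)
        calc (∑ i ∈ range (e+1), |(f.coeff i : L)|)
            ≤ ∑ _i ∈ range (e+1), t := Finset.sum_le_sum fun i _ => (abs_lt_t ht (f.coeff i).2).le
          _ = ((e:L)+1) * t := by rw [Finset.sum_const, card_range]; rw [nsmul_eq_mul]; push_cast; ring
    _ ≤ (t * t) * t ^ e := by
        refine mul_le_mul_of_nonneg_right (mul_le_mul_of_nonneg_right ?_ h0) (pow_nonneg h0 e)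
        have : ((e:L)+1) ∈ K := by
          have := natCast_mem K (e+1); push_cast at this; exact this
        exact (ht _ this).le
    _ = t ^ (e + 2) := by ring

lemma one_le_t_mul_aeval (ht : ∀ c ∈ K, c < t) (f : Polynomial K) (hf : f ≠ 0) :
    1 ≤ t * |Polynomial.aeval t f| := by
  have h1 : (1:L) < t := ht 1 K.one_mem
  have h0 : (0:L) < t := lt_trans one_pos h1
  have hlc : f.leadingCoeff ≠ 0 := leadingCoeff_ne_zero.mpr hf
  have hlcL : ((f.leadingCoeff : L)) ≠ 0 := fun h => hlc (Subtype.ext h)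
  have habs : (0:L) < |(f.leadingCoeff : L)| := abs_pos.mpr hlcL
  rcases Nat.eq_zero_or_pos f.natDegree with hd | hd
  · -- constant case
    have hf' : f = Polynomial.C (f.coeff 0) := f.eq_C_of_natDegree_eq_zero hd
    have hev : Polynomial.aeval t f = ((f.coeff 0 : L)) := by rw [hf']; simp; rfl
    rw [hev]
    have hc0 : (f.coeff 0) = f.leadingCoeff := by rw [leadingCoeff, hd]
    rw [hc0]
    have hmem : |(f.leadingCoeff : L)|⁻¹ ∈ K := K.inv_mem (abs_mem (f.leadingCoeff).2)
    have h2 := ht _ hmem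
    calc (1:L) = |(f.leadingCoeff : L)|⁻¹ * |(f.leadingCoeff : L)| := (inv_mul_cancel₀ habs.ne').symm
      _ ≤ t * |(f.leadingCoeff : L)| := mul_le_mul_of_nonneg_right h2.le (abs_nonneg _)
  · obtain ⟨e, he⟩ : ∃ e, f.natDegree = e + 1 := ⟨f.natDegree - 1, (Nat.succ_pred_eq_of_pos hd).symm⟩
    set a := |(f.leadingCoeff : L)| with ha
    set Ce := (∑ i ∈ range (e+1), |(f.eraseLead.coeff i : L)|) with hCe
    have hCe0 : 0 ≤ Ce := Finset.sum_nonneg fun i _ => abs_nonneg _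
    have hCemem : Ce ∈ K := Subfield.sum_mem K fun i _ => abs_mem (f.eraseLead.coeff i).2
    have hel : |Polynomial.aeval t f.eraseLead| ≤ Ce * t ^ e := by
      refine aeval_abs_le_sum ht _ e ?_
      have h2 := f.eraseLead_natDegree_le
      omega
    have h3 : Polynomial.aeval t f = Polynomial.aeval t f.eraseLead + (f.leadingCoeff : L) * t^(e+1) := by
      conv_lhs => rw [← f.eraseLead_add_C_mul_X_pow]
      rw [map_add (Polynomial.aeval t), map_mul (Polynomial.aeval t), map_pow (Polynomial.aeval t), Polynomial.aeval_C, Polynomial.aeval_X, he]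
      rfl
    have key : a * t^(e+1) - Ce * t^e ≤ |Polynomial.aeval t f| := by
      have h4 : |(f.leadingCoeff : L) * t^(e+1)| ≤ |Polynomial.aeval t f| + |Polynomial.aeval t f.eraseLead| := by
        have : (f.leadingCoeff : L) * t^(e+1) = Polynomial.aeval t f - Polynomial.aeval t f.eraseLead := by
          rw [h3]; ring
        rw [this]
        exact abs_sub _ _
      rw [abs_mul, abs_of_nonneg (pow_nonneg h0.le _), ← ha] at h4
      linarith
    have hat : Ce + 2 < a * t := by
      have hmem : (Ce + 2) * a⁻¹ ∈ K := by
        refine K.mul_mem (K.add_mem hCemem ?_) (K.inv_mem (abs_mem (f.leadingCoeff).2))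
        have h5 := natCast_mem K 2; push_cast at h5; exact h5
      have h6 := ht _ hmem
      calc Ce + 2 = ((Ce+2) * a⁻¹) * a := by field_simp
        _ < t * a := mul_lt_mul_of_pos_right h6 habs
        _ = a * t := mul_comm _ _
    have hte : (1:L) ≤ t^e := one_le_pow₀ h1.le
    have h7 : (2:L) * t^e ≤ |Polynomial.aeval t f| := by
      nlinarith [mul_lt_mul_of_pos_right hat (pow_pos h0 e), pow_succ t e, key]
    have h8 : (2:L) ≤ |Polynomial.aeval t f| := le_trans (by nlinarith) h7
    nlinarith [h8, h1]

lemma exists_rat (z : L) (hz : z ∈ Subfield.closure ((K : Set L) ∪ {t})) :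
    ∃ f g : Polynomial K, Polynomial.aeval t g ≠ 0 ∧
      z * Polynomial.aeval t g = Polynomial.aeval t f := by
  induction hz using Subfield.closure_induction with
  | mem z hzm =>
      rcases hzm with hzK | hzt
      · exact ⟨Polynomial.C ⟨z, hzK⟩, 1, by simp, by simp; rfl⟩
      · obtain rfl : z = t := hzt
        exact ⟨Polynomial.X, 1, by simp, by simp⟩
  | one => exact ⟨1, 1, by simp, by simp⟩
  | add z w hzc hwc hz hw =>
      obtain ⟨f1, g1, hg1, h1⟩ := hz
      obtain ⟨f2, g2, hg2, h2⟩ := hw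
      refine ⟨f1 * g2 + f2 * g1, g1 * g2, by simp [hg1, hg2], ?_⟩
      rw [map_add (Polynomial.aeval t), map_mul (Polynomial.aeval t),
        map_mul (Polynomial.aeval t), map_mul (Polynomial.aeval t)]
      calc (z + w) * (Polynomial.aeval t g1 * Polynomial.aeval t g2)
          = (z * Polynomial.aeval t g1) * Polynomial.aeval t g2
            + (w * Polynomial.aeval t g2) * Polynomial.aeval t g1 := by ring
        _ = _ := by rw [h1, h2]
  | neg z hzc hz =>
      obtain ⟨f, g, hg, h⟩ := hz
      refine ⟨-f, g, hg, ?_⟩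
      have hn : Polynomial.aeval t (-f) = -Polynomial.aeval t f := by
        rw [eq_neg_iff_add_eq_zero, ← map_add (Polynomial.aeval t)]
        simp
      rw [hn, ← h]; ring
  | inv z hzc hz =>
      obtain ⟨f, g, hg, h⟩ := hz
      by_cases hzz : z = 0
      · exact ⟨0, 1, by simp, by simp [hzz]⟩
      · have hfne : Polynomial.aeval t f ≠ 0 := by
          rw [← h]; exact mul_ne_zero hzz hg
        refine ⟨g, f, hfne, ?_⟩
        field_simp
        rw [← h]
  | mul z w hzc hwc hz hw =>
      obtain ⟨f1, g1, hg1, h1⟩ := hz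
      obtain ⟨f2, g2, hg2, h2⟩ := hw
      refine ⟨f1 * f2, g1 * g2, by simp [hg1, hg2], ?_⟩
      rw [map_mul (Polynomial.aeval t), map_mul (Polynomial.aeval t)]
      calc z * w * (Polynomial.aeval t g1 * Polynomial.aeval t g2)
          = (z * Polynomial.aeval t g1) * (w * Polynomial.aeval t g2) := by ring
        _ = _ := by rw [h1, h2]

/-- every element of K(t) is bounded by a power of t -/

lemma closure_bound (ht : ∀ c ∈ K, c < t) (z : L)
    (hz : z ∈ Subfield.closure ((K : Set L) ∪ {t})) : ∃ N : ℕ, |z| ≤ t ^ N := by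
  have h1 : (1:L) < t := ht 1 K.one_mem
  have h0 : (0:L) < t := lt_trans one_pos h1
  obtain ⟨f, g, hg, h⟩ := exists_rat z hz
  have hgne : g ≠ 0 := by rintro rfl; simp at hg
  refine ⟨f.natDegree + 3, ?_⟩
  have hlow := one_le_t_mul_aeval ht g hgne
  have hup := aeval_abs_le ht f
  have habsg : 0 < |Polynomial.aeval t g| := abs_pos.mpr hg
  have hz' : |z| * |Polynomial.aeval t g| = |Polynomial.aeval t f| := by
    rw [← abs_mul, h]
  have hinv : |Polynomial.aeval t g|⁻¹ ≤ t := by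
    rw [inv_le_iff_one_le_mul₀' habsg]
    linarith [hlow]
  calc |z| = |Polynomial.aeval t f| * |Polynomial.aeval t g|⁻¹ := by
        field_simp [← hz']; exact hz'
    _ ≤ t ^ (f.natDegree + 2) * t := by
        exact mul_le_mul hup hinv (inv_nonneg.mpr (abs_nonneg _)) (pow_nonneg h0.le _)
    _ = t ^ (f.natDegree + 3) := by ring

lemma cauchy (p : Polynomial L) (hp : p ≠ 0) (y : L) (hy : p.eval y = 0) (B : L)
    (hB : ∀ i, |p.coeff i| ≤ B) (hlead : 1 ≤ B * |p.leadingCoeff|) :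
    |y| ≤ (p.natDegree : L) * B ^ 2 + 1 := by
  have hB0 : 0 < B := by
    rcases lt_or_ge 0 B with h | h
    · exact h
    · exfalso; nlinarith [abs_nonneg p.leadingCoeff, mul_nonpos_of_nonpos_of_nonneg h (abs_nonneg p.leadingCoeff)]
  have hBnn : (0:L) ≤ (p.natDegree : L) * B ^ 2 := by positivity
  rcases le_or_gt |y| 1 with h | hy1
  · linarith
  -- |y| > 1
  have hd : p.natDegree ≠ 0 := by
    intro h0
    have : p = Polynomial.C (p.coeff 0) := p.eq_C_of_natDegree_eq_zero h0
    rw [this] at hy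
    simp at hy
    rw [this, hy] at hp
    simp at hp
  obtain ⟨e, he⟩ : ∃ e, p.natDegree = e + 1 := ⟨p.natDegree - 1, (Nat.succ_pred_eq_of_pos (Nat.pos_of_ne_zero hd)).symm⟩
  set d := p.natDegree with hdd
  have hsum : p.eval y = ∑ i ∈ range (d+1), p.coeff i * y ^ i := by
    rw [Polynomial.eval_eq_sum_range]
  rw [Finset.sum_range_succ] at hsum
  have hcd : p.coeff d = p.leadingCoeff := rfl
  have hkey : |p.leadingCoeff| * |y| ^ d ≤ (d:L) * B * |y| ^ e := by
    have h2 : p.coeff d * y ^ d = -∑ i ∈ range d, p.coeff i * y ^ i := by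
      rw [hy] at hsum; linarith [hsum]
    calc |p.leadingCoeff| * |y| ^ d = |p.coeff d * y ^ d| := by
          rw [abs_mul, abs_pow, hcd]
      _ = |∑ i ∈ range d, p.coeff i * y ^ i| := by rw [h2, abs_neg]
      _ ≤ ∑ i ∈ range d, |p.coeff i * y ^ i| := Finset.abs_sum_le_sum_abs _ _
      _ ≤ ∑ i ∈ range d, B * |y| ^ e := by
          refine Finset.sum_le_sum fun i hi => ?_
          rw [abs_mul, abs_pow]
          refine mul_le_mul (hB i) (pow_le_pow_right₀ hy1.le ?_) (pow_nonneg (abs_nonneg _) _) hB0.le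
          have := mem_range.mp hi; omega
      _ = (d:L) * B * |y| ^ e := by rw [Finset.sum_const, card_range, nsmul_eq_mul]; ring
  have hye : (0:L) < |y| ^ e := pow_pos (lt_trans one_pos hy1) e
  have hyd : |y| ^ d = |y| ^ e * |y| := by rw [he, pow_succ]
  rw [hyd] at hkey
  have hkey2 : |p.leadingCoeff| * |y| ≤ (d:L) * B := by
    have := mul_le_mul_of_nonneg_right hkey (le_of_lt (inv_pos.mpr hye))
    calc |p.leadingCoeff| * |y| = |p.leadingCoeff| * (|y|^e * |y|) * (|y|^e)⁻¹ := by
          field_simp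
      _ ≤ (d:L) * B * |y|^e * (|y|^e)⁻¹ := by
          refine mul_le_mul_of_nonneg_right ?_ (le_of_lt (inv_pos.mpr hye))
          linarith [hkey]
      _ = (d:L) * B := by field_simp
  calc |y| ≤ |y| * (B * |p.leadingCoeff|) := le_mul_of_one_le_right (abs_nonneg y) hlead
    _ = B * (|p.leadingCoeff| * |y|) := by ring
    _ ≤ B * ((d:L) * B) := mul_le_mul_of_nonneg_left hkey2 hB0.le
    _ = (d:L) * B^2 := by ring
    _ ≤ _ := by linarith

lemma root_bound (ht : ∀ c ∈ K, c < t) (p : Polynomial L) (hp : p ≠ 0)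
    (hc : ∀ i, p.coeff i ∈ Subfield.closure ((K : Set L) ∪ {t}))
    (y : L) (hy : p.eval y = 0) : ∃ N : ℕ, |y| ≤ t ^ N := by
  have h1 : (1:L) < t := ht 1 K.one_mem
  have h0 : (0:L) < t := lt_trans one_pos h1
  have hcN : ∀ i, ∃ N : ℕ, |p.coeff i| ≤ t ^ N := fun i => closure_bound ht _ (hc i)
  choose Nf hNf using hcN
  have hlc : p.leadingCoeff ≠ 0 := leadingCoeff_ne_zero.mpr hp
  obtain ⟨M, hM⟩ : ∃ M : ℕ, |p.leadingCoeff⁻¹| ≤ t ^ M :=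
    closure_bound ht _ (Subfield.inv_mem _ (hc p.natDegree))
  set N := max ((Finset.range (p.natDegree + 1)).sup Nf) M with hN
  have hBall : ∀ i, |p.coeff i| ≤ t ^ N := by
    intro i
    rcases le_or_gt i p.natDegree with h | h
    · refine le_trans (hNf i) (pow_le_pow_right₀ h1.le ?_)
      exact le_trans (Finset.le_sup (mem_range.mpr (Nat.lt_succ_of_le h))) (le_max_left _ _)
    · rw [p.coeff_eq_zero_of_natDegree_lt h]; simp
      positivity
  have hlead : 1 ≤ t ^ N * |p.leadingCoeff| := by
    have h2 : |p.leadingCoeff⁻¹| ≤ t ^ N := le_trans hM (pow_le_pow_right₀ h1.le (le_max_right _ _))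
    have h3 : 0 < |p.leadingCoeff| := abs_pos.mpr hlc
    rw [abs_inv] at h2
    calc (1:L) = |p.leadingCoeff|⁻¹ * |p.leadingCoeff| := (inv_mul_cancel₀ h3.ne').symm
      _ ≤ t ^ N * |p.leadingCoeff| := mul_le_mul_of_nonneg_right h2 (abs_nonneg _)
  have hca := cauchy p hp y hy (t ^ N) hBall hlead
  refine ⟨2 * N + 2, ?_⟩
  have hd1 : ((p.natDegree : L) + 1) < t := by
    have := natCast_mem K (p.natDegree + 1); push_cast at this
    exact ht _ this
  have htN : (1:L) ≤ t ^ N := one_le_pow₀ h1.le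
  calc |y| ≤ (p.natDegree : L) * (t^N)^2 + 1 := hca
    _ ≤ ((p.natDegree : L) + 1) * (t^N)^2 := by nlinarith [sq_nonneg (t^N)]
    _ ≤ t * (t^N)^2 := by nlinarith [sq_nonneg (t^N), pow_pos h0 N]
    _ = t ^ (2*N+1) := by rw [← pow_mul]; ring
    _ ≤ t ^ (2*N+2) := pow_le_pow_right₀ h1.le (by omega)

lemma no_inf_root (q : Polynomial K) (hq : q ≠ 0) (y : L)
    (hy : Polynomial.aeval y q = 0) (hyinf : ∀ c ∈ K, c < y) : False := by
  set p : Polynomial L := q.map (algebraMap K L) with hpdef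
  have hinj : Function.Injective (algebraMap K L) := fun a b h => Subtype.ext h
  have hp : p ≠ 0 := (Polynomial.map_ne_zero_iff hinj).mpr hq
  have hpe : p.eval y = 0 := by
    rw [hpdef, Polynomial.eval_map, ← Polynomial.aeval_def]; exact hy
  have hdeg : p.natDegree = q.natDegree := q.natDegree_map (algebraMap K L)
  have hcoeff : ∀ i, p.coeff i = (q.coeff i : L) := fun i => q.coeff_map _ i
  have hlcq : q.leadingCoeff ≠ 0 := leadingCoeff_ne_zero.mpr hq
  have hlead : p.leadingCoeff = (q.leadingCoeff : L) := by
    rw [leadingCoeff, hdeg, hcoeff]; rfl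
  have hlcL : (q.leadingCoeff : L) ≠ 0 := fun h => hlcq (Subtype.ext h)
  have habs : (0:L) < |(q.leadingCoeff : L)| := abs_pos.mpr hlcL
  set d := q.natDegree with hd
  set s := (∑ i ∈ range (d+1), |(q.coeff i : L)|) with hs
  have hs0 : 0 ≤ s := Finset.sum_nonneg fun i _ => abs_nonneg _
  set u := |(q.leadingCoeff : L)|⁻¹ with hu
  have hu0 : 0 < u := inv_pos.mpr habs
  set B := s + u with hB
  have hBmem : B ∈ K := by
    refine K.add_mem (Subfield.sum_mem K fun i _ => abs_mem (q.coeff i).2)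
      (K.inv_mem (abs_mem (q.leadingCoeff).2))
  have hBc : ∀ i, |p.coeff i| ≤ B := by
    intro i
    rcases le_or_gt i d with h | h
    · rw [hcoeff]
      calc |(q.coeff i : L)| ≤ s := Finset.single_le_sum (f := fun i => |(q.coeff i : L)|)
            (fun i _ => abs_nonneg _) (mem_range.mpr (Nat.lt_succ_of_le h))
        _ ≤ B := by linarith
    · rw [p.coeff_eq_zero_of_natDegree_lt (by rw [hdeg]; omega)]
      simp only [abs_zero]; linarith
  have hBl : 1 ≤ B * |p.leadingCoeff| := by
    rw [hlead]
    calc (1:L) = u * |(q.leadingCoeff : L)| := (inv_mul_cancel₀ habs.ne').symm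
      _ ≤ B * |(q.leadingCoeff : L)| := mul_le_mul_of_nonneg_right (by linarith) (abs_nonneg _)
  have hca := cauchy p hp y hpe B hBc hBl
  rw [hdeg] at hca
  have hmem : ((d:L) * B^2 + 1) ∈ K := by
    rw [sq]
    refine K.add_mem (K.mul_mem ?_ (K.mul_mem hBmem hBmem)) K.one_mem
    exact_mod_cast natCast_mem K d
  have := hyinf _ hmem
  have hya := le_abs_self y
  linarith

lemma aeval_mem_closure (q : Polynomial K) (y : L) :
    Polynomial.aeval y q ∈ Subfield.closure ((K : Set L) ∪ {y}) := by
  have h : Polynomial.aeval y q = ∑ i ∈ range (q.natDegree+1), (q.coeff i : L) * y ^ i := by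
    rw [Polynomial.aeval_eq_sum_range]
    exact Finset.sum_congr rfl fun i _ => by rw [Subfield.smul_def, smul_eq_mul]
  rw [h]
  refine Subfield.sum_mem _ fun i _ => ?_
  refine Subfield.mul_mem _ (Subfield.subset_closure ?_) (Subfield.pow_mem _ (Subfield.subset_closure ?_) i)
  · exact Set.mem_union_left _ (q.coeff i).2
  · exact Set.mem_union_right _ rfl

lemma main_half (hx : ∀ c ∈ K, c < t) (y : L)
    (hy : IsAlgebraic (Subfield.closure ((K : Set L) ∪ {t})) y)
    (hyinf : ∀ c ∈ K, c < y) : ∃ n m : ℕ, y ≤ t ^ n ∧ t ≤ y ^ m := by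
  set Kt := Subfield.closure ((K : Set L) ∪ {t}) with hKt
  obtain ⟨p, hp0, hpy⟩ := hy
  set P : Polynomial L := p.map (algebraMap Kt L) with hPdef
  have hinj : Function.Injective (algebraMap Kt L) := fun a b h => Subtype.ext h
  have hP0 : P ≠ 0 := (Polynomial.map_ne_zero_iff hinj).mpr hp0
  have hPy : P.eval y = 0 := by
    rw [hPdef, Polynomial.eval_map, ← Polynomial.aeval_def]; exact hpy
  have hPc : ∀ i, P.coeff i ∈ Kt := fun i => by
    rw [hPdef, Polynomial.coeff_map]; exact (p.coeff i).2
  -- first half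
  obtain ⟨N, hN⟩ := root_bound hx P hP0 hPc y hPy
  have hsecond : ∃ M : ℕ, t ≤ y ^ M := by
    classical
    -- represent coefficients as ratios of polynomials in t
    have hrep : ∀ i, ∃ f g : Polynomial K, Polynomial.aeval t g ≠ 0 ∧
        P.coeff i * Polynomial.aeval t g = Polynomial.aeval t f :=
      fun i => exists_rat _ (hPc i)
    choose f g hg hfg using hrep
    set d := P.natDegree with hd
    set G : L := ∏ i ∈ range (d+1), Polynomial.aeval t (g i) with hG
    have hGne : G ≠ 0 := Finset.prod_ne_zero_iff.mpr fun i _ => hg i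
    set h : ℕ → Polynomial K := fun i => f i * ((range (d+1)).erase i).prod g with hh
    have haevalh : ∀ i ∈ range (d+1),
        Polynomial.aeval t (h i) = P.coeff i * G := by
      intro i hi
      rw [hh]
      rw [map_mul (Polynomial.aeval (R := K) t), map_prod (Polynomial.aeval (R := K) t) _ _]
      rw [← hfg i]
      rw [hG, ← Finset.mul_prod_erase _ _ hi]
      ring
    have hkey : ∑ i ∈ range (d+1), Polynomial.aeval t (h i) * y ^ i = 0 := by
      calc ∑ i ∈ range (d+1), Polynomial.aeval t (h i) * y ^ i
          = ∑ i ∈ range (d+1), G * (P.coeff i * y ^ i) := by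
            refine Finset.sum_congr rfl fun i hi => ?_
            rw [haevalh i hi]; ring
        _ = G * ∑ i ∈ range (d+1), P.coeff i * y ^ i := by rw [Finset.mul_sum]
        _ = G * P.eval y := by rw [Polynomial.eval_eq_sum_range]
        _ = 0 := by rw [hPy, mul_zero]
    set D := (range (d+1)).sup (fun i => (h i).natDegree) with hD
    have haevalh2 : ∀ i ∈ range (d+1), Polynomial.aeval t (h i)
        = ∑ j ∈ range (D+1), ((h i).coeff j : L) * t ^ j := by
      intro i hi
      rw [Polynomial.aeval_eq_sum_range'
        (Nat.lt_succ_of_le (Finset.le_sup (f := fun i => (h i).natDegree) hi))]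
      exact Finset.sum_congr rfl fun j _ => by rw [Subfield.smul_def, smul_eq_mul]
    set Q : ℕ → Polynomial K := fun j =>
      ∑ i ∈ range (d+1), Polynomial.C ((h i).coeff j) * Polynomial.X ^ i with hQ
    have haevalQ : ∀ j, Polynomial.aeval y (Q j)
        = ∑ i ∈ range (d+1), ((h i).coeff j : L) * y ^ i := by
      intro j
      have heq : Polynomial.aeval y (Q j)
          = ∑ i ∈ range (d+1), Polynomial.aeval y (Polynomial.C ((h i).coeff j) * Polynomial.X ^ i) := by
        rw [hQ]
        exact map_sum (Polynomial.aeval y) _ _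
      rw [heq]
      refine Finset.sum_congr rfl fun i _ => ?_
      rw [map_mul (Polynomial.aeval y), map_pow (Polynomial.aeval y),
        Polynomial.aeval_C, Polynomial.aeval_X]
      rfl
    have hswap : ∑ j ∈ range (D+1), (Polynomial.aeval y (Q j)) * t ^ j = 0 := by
      calc ∑ j ∈ range (D+1), (Polynomial.aeval y (Q j)) * t ^ j
          = ∑ j ∈ range (D+1), ∑ i ∈ range (d+1), ((h i).coeff j : L) * y ^ i * t ^ j := by
            refine Finset.sum_congr rfl fun j _ => ?_
            rw [haevalQ j, Finset.sum_mul]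
        _ = ∑ i ∈ range (d+1), ∑ j ∈ range (D+1), ((h i).coeff j : L) * y ^ i * t ^ j :=
            Finset.sum_comm
        _ = ∑ i ∈ range (d+1), Polynomial.aeval t (h i) * y ^ i := by
            refine Finset.sum_congr rfl fun i hi => ?_
            rw [haevalh2 i hi, Finset.sum_mul]
            exact Finset.sum_congr rfl fun j _ => by ring
        _ = 0 := hkey
    by_cases hall : ∀ j ∈ range (D+1), Polynomial.aeval y (Q j) = 0
    · -- contradiction branch: y would be algebraic over K
      exfalso
      have hcd : P.coeff d ≠ 0 := by
        rw [hd, Polynomial.coeff_natDegree]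
        exact leadingCoeff_ne_zero.mpr hP0
      have hhd : Polynomial.aeval t (h d) ≠ 0 := by
        rw [haevalh d (mem_range.mpr (Nat.lt_succ_self d))]
        exact mul_ne_zero hcd hGne
      have hhd0 : h d ≠ 0 := by rintro h0; rw [h0] at hhd; simp at hhd
      set j0 := (h d).natDegree with hj0
      have hj0le : j0 ∈ range (D+1) := by
        refine mem_range.mpr (Nat.lt_succ_of_le ?_)
        exact Finset.le_sup (f := fun i => (h i).natDegree) (mem_range.mpr (Nat.lt_succ_self d))
      have hQne : Q j0 ≠ 0 := by
        intro h0
        have hcoeffd : (Q j0).coeff d = (h d).coeff j0 := by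
          rw [hQ]
          rw [Polynomial.finset_sum_coeff]
          simp only [Polynomial.coeff_C_mul, Polynomial.coeff_X_pow]
          rw [Finset.sum_eq_single d]
          · simp
          · intro b _ hb; simp [Ne.symm hb]
          · intro hb; exact absurd (mem_range.mpr (Nat.lt_succ_self d)) hb
        rw [h0] at hcoeffd
        simp only [Polynomial.coeff_zero] at hcoeffd
        exact absurd hcoeffd.symm (by
          rw [hj0]
          exact Polynomial.leadingCoeff_ne_zero.mpr hhd0)
      exact no_inf_root (Q j0) hQne y (hall j0 hj0le) hyinf
    · -- main branch: t is a root of a nonzero polynomial over K(y)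
      push_neg at hall
      obtain ⟨j1, hj1, hQj1⟩ := hall
      set R : Polynomial L := ∑ j ∈ range (D+1),
        Polynomial.C (Polynomial.aeval y (Q j)) * Polynomial.X ^ j with hR
      have hRcoeff : ∀ k, R.coeff k =
          if k ∈ range (D+1) then Polynomial.aeval y (Q k) else 0 := by
        intro k
        rw [hR, Polynomial.finset_sum_coeff]
        simp only [Polynomial.coeff_C_mul, Polynomial.coeff_X_pow]
        by_cases hk : k ∈ range (D+1)
        · rw [if_pos hk, Finset.sum_eq_single k]
          · simp
          · intro b _ hb; simp [Ne.symm hb]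
          · intro hb; exact absurd hk hb
        · rw [if_neg hk]
          refine Finset.sum_eq_zero fun b hb => ?_
          have hkb : k ≠ b := by rintro rfl; exact hk hb
          simp [hkb]
      have hRne : R ≠ 0 := by
        intro h0
        have := hRcoeff j1
        rw [h0, if_pos hj1] at this
        simp at this
        exact hQj1 this.symm
      have hReval : R.eval t = 0 := by
        rw [hR]
        rw [Polynomial.eval_finset_sum]
        simp only [Polynomial.eval_mul, Polynomial.eval_C, Polynomial.eval_pow,
          Polynomial.eval_X]
        exact hswap
      have hRc : ∀ k, R.coeff k ∈ Subfield.closure ((K : Set L) ∪ {y}) := by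
        intro k
        rw [hRcoeff k]
        split
        · exact aeval_mem_closure _ _
        · exact Subfield.zero_mem _
      obtain ⟨M, hM⟩ := root_bound hyinf R hRne hRc t hReval
      have ht0 : (0:L) < t := lt_trans one_pos (hx 1 K.one_mem)
      exact ⟨M, le_trans (le_abs_self t) hM⟩
  obtain ⟨M, hM⟩ := hsecond
  exact ⟨N, M, le_trans (le_abs_self y) hN, hM⟩

end Stmt13Aux

/-- Let `K` be a real closed subfield of a real closed field `L` and `x ∈ L`
positive and infinite over `K` (`x > c` for all `c ∈ K`).  Then every element `y` of the
real closure of `K(x)` inside `L` (i.e. every `y` algebraic over `K(x)`) which is infinite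
over `K` is comparable to `x`: there are `m, n ∈ ℕ` with `y ≤ xⁿ` and `x ≤ yᵐ`.  Hence any
two positive infinite elements of the real closure of `K(x)` are comparable, so it has
exactly one more comparability class of positive infinite elements than `K`. -/
theorem stmt13 (L : Type*) [Field L] [LinearOrder L] [IsStrictOrderedRing L] (hL : IsRealClosedField L)
    (K : Subfield L) (hK : IsRealClosedField K)
    (x : L) (hxpos : 0 < x) (hx : ∀ c ∈ K, c < x) :
    (∀ y : L, IsAlgebraic (Subfield.closure ((K : Set L) ∪ {x})) y →
      (∀ c ∈ K, c < y) → ∃ n m : ℕ, y ≤ x ^ n ∧ x ≤ y ^ m) ∧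
    (∀ y z : L, IsAlgebraic (Subfield.closure ((K : Set L) ∪ {x})) y →
      IsAlgebraic (Subfield.closure ((K : Set L) ∪ {x})) z →
      (∀ c ∈ K, c < y) → (∀ c ∈ K, c < z) →
      ∃ n m : ℕ, y ≤ z ^ n ∧ z ≤ y ^ m) := by
  classical
  have part1 : ∀ y : L, IsAlgebraic (Subfield.closure ((K : Set L) ∪ {x})) y →
      (∀ c ∈ K, c < y) → ∃ n m : ℕ, y ≤ x ^ n ∧ x ≤ y ^ m :=
    fun y hy hyinf => Stmt13Aux.main_half hx y hy hyinf
  refine ⟨part1, fun y z hy hz hyinf hzinf => ?_⟩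
  obtain ⟨n1, m1, h1a, h1b⟩ := part1 y hy hyinf
  obtain ⟨n2, m2, h2a, h2b⟩ := part1 z hz hzinf
  refine ⟨m2 * n1, m1 * n2, ?_, ?_⟩
  · calc y ≤ x ^ n1 := h1a
      _ ≤ (z ^ m2) ^ n1 := pow_le_pow_left₀ hxpos.le h2b n1
      _ = z ^ (m2 * n1) := by rw [← pow_mul]
  · calc z ≤ x ^ n2 := h2a
      _ ≤ (y ^ m1) ^ n2 := pow_le_pow_left₀ hxpos.le h1b n2
      _ = y ^ (m1 * n2) := by rw [← pow_mul]
end
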